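/- For two locks, blocking type (P_1P_1, P_2) is impossible for a correct compositional translation, for any initial store. -/

import Mathlib

/-- Symbols of SYNCSIMPLE: `!` (bang) and `?` (ques). -/
inductive SSym | bang | ques
deriving DecidableEq

/-- A SYNCSIMPLE subprocess: a string over {!,?} ending with `0` (false) or `✓` (true). -/
abbrev SSub := List SSym × Bool

/-- A SYNCSIMPLE process: a multiset of subprocesses. -/
abbrev SProc := Multiset SSub

/-- The SYS reduction: a leading `!` and a leading `?` of two subprocesses are consumed. -/
def SysStep (P Q : SProc) : Prop :=
  ∃ (u1 u2 : List SSym) (b1 b2 : Bool) (R : SProc),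
    P = (SSym.bang :: u1, b1) ::ₘ (SSym.ques :: u2, b2) ::ₘ R ∧
    Q = (u1, b1) ::ₘ (u2, b2) ::ₘ R

/-- A process is successful if it contains the subprocess `✓`. -/
def SSuccessful (P : SProc) : Prop := (([], true) : SSub) ∈ P

def SMayConv (P : SProc) : Prop :=
  ∃ Q, Relation.ReflTransGen SysStep P Q ∧ SSuccessful Q

def SMustConv (P : SProc) : Prop :=
  ∀ Q, Relation.ReflTransGen SysStep P Q → SMayConv Q

/-- Lock operations: put `P_i` and take `T_i`. -/
inductive LOp | put | take
deriving DecidableEq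

abbrev LSym (k : ℕ) := LOp × Fin k
abbrev LSub (k : ℕ) := List (LSym k) × Bool
abbrev LProc (k : ℕ) := Multiset (LSub k)
/-- The store of `k` locks: `true` = full (■), `false` = empty (□). -/
abbrev Store (k : ℕ) := Fin k → Bool

/-- LOCKSIMPLE step: `P_i` fills an empty lock `i` (blocks if full);
    `T_i` empties lock `i` and never blocks. -/
def LockStep {k : ℕ} : (LProc k × Store k) → (LProc k × Store k) → Prop :=
  fun s t => ∃ (i : Fin k) (u : List (LSym k)) (b : Bool) (R : LProc k),
    ((s.1 = ((LOp.put, i) :: u, b) ::ₘ R ∧ s.2 i = false ∧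
      t.1 = (u, b) ::ₘ R ∧ t.2 = Function.update s.2 i true) ∨
     (s.1 = ((LOp.take, i) :: u, b) ::ₘ R ∧
      t.1 = (u, b) ::ₘ R ∧ t.2 = Function.update s.2 i false))

def LSuccessful {k : ℕ} (s : LProc k × Store k) : Prop := (([], true) : LSub k) ∈ s.1

def LMayConv {k : ℕ} (s : LProc k × Store k) : Prop :=
  ∃ t, Relation.ReflTransGen LockStep s t ∧ LSuccessful t

def LMustConv {k : ℕ} (s : LProc k × Store k) : Prop :=
  ∀ t, Relation.ReflTransGen LockStep s t → LMayConv t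

/-- The compositional translation determined by the strings `tb = τ(!)` and `tq = τ(?)`,
    applied to a subprocess. -/
def transSub {k : ℕ} (tb tq : List (LSym k)) (u : SSub) : LSub k :=
  (u.1.flatMap (fun c => match c with | SSym.bang => tb | SSym.ques => tq), u.2)

/-- The compositional translation applied to a process. -/
def transProc {k : ℕ} (tb tq : List (LSym k)) (P : SProc) : LProc k :=
  P.map (transSub tb tq)

/-- Correctness of the compositional translation `(tb, tq)` with initial store `IS`:
    may- and must-convergence are preserved and reflected. -/
def Correct {k : ℕ} (IS : Store k) (tb tq : List (LSym k)) : Prop :=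
  ∀ P : SProc,
    (SMayConv P ↔ LMayConv (transProc tb tq P, IS)) ∧
    (SMustConv P ↔ LMustConv (transProc tb tq P, IS))

/-- The solo execution of the string `s` from store `IS` reaches the point where
    `(put, i) :: rest` remains and deadlocks there since lock `i` is full. -/
def SoloBlocked {k : ℕ} (IS : Store k) (s : List (LSym k)) (i : Fin k)
    (rest : List (LSym k)) : Prop :=
  ∃ C : Store k,
    Relation.ReflTransGen LockStep (({(s, false)} : LProc k), IS)
      (({((LOp.put, i) :: rest, false)} : LProc k), C) ∧
    C i = true

/-- Blocking type `P_i`: the blocking prefix is `R P_i` with `R` free of `P_i, T_i`. -/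
def BlockingTypeP {k : ℕ} (IS : Store k) (s : List (LSym k)) (i : Fin k) : Prop :=
  ∃ r rest, s = r ++ (LOp.put, i) :: rest ∧ (∀ x ∈ r, x.2 ≠ i) ∧
    SoloBlocked IS s i rest

/-- Blocking type `P_i P_i`: the blocking prefix is `R₁ P_i R₂ P_i` with
    `R₂` free of `P_i, T_i`, deadlocking exactly before the last `P_i`. -/
def BlockingTypePP {k : ℕ} (IS : Store k) (s : List (LSym k)) (i : Fin k) : Prop :=
  ∃ r1 r2 rest, s = r1 ++ (LOp.put, i) :: r2 ++ (LOp.put, i) :: rest ∧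
    (∀ x ∈ r2, x.2 ≠ i) ∧ SoloBlocked IS s i rest

/-!
Locks are numbered from `0`, so the paper's `P_1`, `P_2` are `(put, 0)`, `(put, 1)`.

Since `τ(?)` blocks at `P_2` without touching lock 1 before, lock 1 is initially full. Since `τ(!)`
reaches its second `P_1` with lock 0 full, its prefix up to there runs from any store below the
initial one (pointwise, `false < true`) and leaves lock 0 full. In the translation of the
must-convergent `?0 | !✓ | … | !✓` we run `τ(?)` one operation at a time, and before each one, if
the store is below the initial one, park a fresh copy of `τ(!)` just before its blocking `P_1`.
Either way lock 0 is then full (lock 1 never exceeds its initial value), so once `τ(?)` ends or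
blocks on a full lock, all parked copies wait on lock 0: a deadlock without `✓`.
-/

open Multiset Relation

section SoloRun

variable {k : ℕ}

inductive SoloRun : Store k → List (LSym k) → Store k → Prop
  | nil (σ : Store k) : SoloRun σ [] σ
  | put {σ τ : Store k} {i : Fin k} {w : List (LSym k)} :
      σ i = false → SoloRun (Function.update σ i true) w τ → SoloRun σ ((LOp.put, i) :: w) τ
  | take {σ τ : Store k} {i : Fin k} {w : List (LSym k)} :
      SoloRun (Function.update σ i false) w τ → SoloRun σ ((LOp.take, i) :: w) τ

namespace SoloRun

theorem append {σ τ ρ : Store k} {p q : List (LSym k)}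
    (hp : SoloRun σ p τ) (hq : SoloRun τ q ρ) : SoloRun σ (p ++ q) ρ := by
  induction hp with
  | nil => exact hq
  | put hi _ ih => exact put hi (ih hq)
  | take _ ih => exact take (ih hq)

theorem reflTransGen_lockStep {σ τ : Store k} {w : List (LSym k)} (h : SoloRun σ w τ)
    (s : List (LSym k)) (b : Bool) (R : LProc k) :
    ReflTransGen LockStep ((w ++ s, b) ::ₘ R, σ) ((s, b) ::ₘ R, τ) := by
  induction h with
  | nil => exact .refl
  | @put σ τ i w hi _ ih => exact .head ⟨i, w ++ s, b, R, .inl ⟨rfl, hi, rfl, rfl⟩⟩ ih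
  | @take σ τ i w _ ih => exact .head ⟨i, w ++ s, b, R, .inr ⟨rfl, rfl, rfl⟩⟩ ih

theorem apply_of_forall_ne {σ τ : Store k} {w : List (LSym k)} {i : Fin k}
    (h : SoloRun σ w τ) (hw : ∀ x ∈ w, x.2 ≠ i) : τ i = σ i := by
  induction h with
  | nil => rfl
  | @put σ τ j w _ _ ih | @take σ τ j w _ ih =>
    rw [ih fun x hx => hw x (List.mem_cons_of_mem _ hx),
      Function.update_of_ne (hw _ List.mem_cons_self).symm]

theorem apply_eq_of_mem {σ σ' τ τ' : Store k} {w : List (LSym k)} {i : Fin k}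
    (h : SoloRun σ w τ) (h' : SoloRun σ' w τ') (hi : ∃ x ∈ w, x.2 = i) : τ i = τ' i := by
  induction h generalizing σ' with
  | nil => simp at hi
  | @put σ τ j w _ hrun ih | @take σ τ j w hrun ih =>
    rcases h' with _ | ⟨-, hrun'⟩ | hrun'
    by_cases htail : ∃ x ∈ w, x.2 = i
    · exact ih hrun' htail
    · have hfree : ∀ x ∈ w, x.2 ≠ i := fun x hx hxi => htail ⟨x, hx, hxi⟩
      obtain rfl : j = i := by
        obtain ⟨x, hx, rfl⟩ := hi
        rcases List.mem_cons.mp hx with rfl | hx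
        · rfl
        · exact absurd rfl (hfree x hx)
      rw [hrun.apply_of_forall_ne hfree, hrun'.apply_of_forall_ne hfree]
      simp

theorem exists_of_le {σ σ' τ : Store k} {w : List (LSym k)} (h : SoloRun σ w τ) (hle : σ' ≤ σ) :
    ∃ τ', SoloRun σ' w τ' := by
  induction h generalizing σ' with
  | nil => exact ⟨σ', nil σ'⟩
  | @put σ τ i w hi _ ih =>
    obtain ⟨τ', h'⟩ := ih (update_le_update_iff.2 ⟨le_rfl, fun j _ => hle j⟩)
    exact ⟨τ', put (le_bot_iff.1 (hi ▸ hle i : σ' i ≤ false)) h'⟩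
  | @take σ τ i w _ ih =>
    obtain ⟨τ', h'⟩ := ih (update_le_update_iff.2 ⟨le_rfl, fun j _ => hle j⟩)
    exact ⟨τ', take h'⟩

end SoloRun

theorem LockStep.singleton_inv {w : List (LSym k)} {b : Bool} {σ : Store k}
    {t : LProc k × Store k} (h : LockStep ({(w, b)}, σ) t) :
    ∃ x w' τ, w = x :: w' ∧ t = ({(w', b)}, τ) ∧ SoloRun σ [x] τ := by
  obtain ⟨i, u, b', R, ⟨h1, hi, h3, h4⟩ | ⟨h1, h3, h4⟩⟩ := h <;>
  · obtain ⟨⟨rfl, rfl⟩, rfl⟩ := (singleton_eq_cons_iff _).1 h1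
    refine ⟨_, u, _, rfl, Prod.ext (by simpa using h3) h4, ?_⟩
    first | exact .put hi (.nil _) | exact .take (.nil _)

theorem soloRun_of_reflTransGen {w : List (LSym k)} {b : Bool} {σ : Store k}
    {t : LProc k × Store k} (h : ReflTransGen LockStep ({(w, b)}, σ) t) :
    ∃ p z τ, w = p ++ z ∧ t = ({(z, b)}, τ) ∧ SoloRun σ p τ := by
  induction h with
  | refl => exact ⟨[], w, σ, rfl, rfl, .nil σ⟩
  | tail _ hstep ih =>
    obtain ⟨p, z, τ, rfl, rfl, hp⟩ := ih
    obtain ⟨x, z', τ', rfl, rfl, hx⟩ := LockStep.singleton_inv hstep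
    exact ⟨p ++ [x], z', τ', by simp, rfl, hp.append hx⟩

theorem SoloBlocked.exists_soloRun {IS : Store k} {p rest : List (LSym k)} {i : Fin k}
    (h : SoloBlocked IS (p ++ (LOp.put, i) :: rest) i rest) :
    ∃ C, SoloRun IS p C ∧ C i = true := by
  obtain ⟨C, hrun, hC⟩ := h
  obtain ⟨p', z, τ, hsplit, ht, hp'⟩ := soloRun_of_reflTransGen hrun
  obtain ⟨hz, rfl⟩ := Prod.ext_iff.1 ht
  obtain rfl : _ = z := congrArg Prod.fst (singleton_inj.1 hz)
  obtain rfl : p = p' := List.append_cancel_right hsplit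
  exact ⟨C, hp', hC⟩

theorem BlockingTypeP.apply_eq_true {IS : Store k} {s : List (LSym k)} {i : Fin k}
    (h : BlockingTypeP IS s i) : IS i = true := by
  obtain ⟨r, rest, rfl, hr, hblocked⟩ := h
  obtain ⟨C, hrun, hC⟩ := hblocked.exists_soloRun
  rwa [← hrun.apply_of_forall_ne hr]

theorem BlockingTypePP.exists_soloRun_apply_eq_true {IS : Store k} {s : List (LSym k)}
    {i : Fin k} (h : BlockingTypePP IS s i) :
    ∃ pre rest, s = pre ++ (LOp.put, i) :: rest ∧
      ∀ σ ≤ IS, ∃ τ, SoloRun σ pre τ ∧ τ i = true := by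
  obtain ⟨r1, r2, rest, rfl, -, hblocked⟩ := h
  obtain ⟨C, hrun, hC⟩ := hblocked.exists_soloRun
  refine ⟨_, rest, rfl, fun σ hσ => ?_⟩
  obtain ⟨τ, hτ⟩ := hrun.exists_of_le hσ
  exact ⟨τ, hτ, hτ.apply_eq_of_mem hrun ⟨(LOp.put, i), by simp, rfl⟩ ▸ hC⟩

end SoloRun

section Deadlock

variable {k : ℕ}

def ThreadStuck (σ : Store k) : LSub k → Prop
  | ([], b) => b = false
  | ((LOp.put, j) :: _, _) => σ j = true
  | ((LOp.take, _) :: _, _) => False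

theorem SoloRun.threadStuck_or_exists (σ : Store k) (x : LSym k) (w : List (LSym k)) (b : Bool) :
    ThreadStuck σ (x :: w, b) ∨ ∃ τ, SoloRun σ [x] τ := by
  obtain ⟨_ | _, j⟩ := x
  · cases hj : σ j
    · exact .inr ⟨_, .put hj (.nil _)⟩
    · exact .inl hj
  · exact .inr ⟨_, .take (.nil _)⟩

theorem not_lMayConv_of_forall_threadStuck {M : LProc k} {σ : Store k}
    (h : ∀ x ∈ M, ThreadStuck σ x) : ¬ LMayConv (M, σ) := by
  rintro ⟨t, hrun, hsucc⟩
  rcases hrun.cases_head with rfl | ⟨t', ⟨j, u, b, R, ⟨hM, hj, -⟩ | ⟨hM, -⟩⟩, -⟩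
  · exact Bool.true_eq_false.mp (h _ hsucc)
  · have := h _ (hM ▸ mem_cons_self _ _)
    simp_all [ThreadStuck]
  · exact h _ (hM ▸ mem_cons_self _ _)

end Deadlock

section SyncSimple

theorem SSuccessful.sysStep {P Q : SProc} (hP : SSuccessful P) (h : SysStep P Q) :
    SSuccessful Q := by
  obtain ⟨u1, u2, b1, b2, R, rfl, rfl⟩ := h
  simp_all [SSuccessful]

theorem SSuccessful.of_sysStep_ques_cons_bangs {m : ℕ} {S : SProc}
    (h : SysStep (([SSym.ques], false) ::ₘ replicate m ([SSym.bang], true)) S) :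
    SSuccessful S := by
  obtain ⟨u1, u2, b1, b2, R, hP, rfl⟩ := h
  have hmem : (SSym.bang :: u1, b1) ∈ ([SSym.ques], false) ::ₘ replicate m ([SSym.bang], true) :=
    hP ▸ mem_cons_self _ _
  simp only [mem_cons, Prod.mk.injEq, List.cons.injEq, reduceCtorEq, false_and, mem_replicate,
    false_or] at hmem
  obtain ⟨-, ⟨-, rfl⟩, rfl⟩ := hmem
  exact mem_cons_self _ _

theorem sMustConv_ques_cons_bangs (m : ℕ) :
    SMustConv (([SSym.ques], false) ::ₘ replicate (m + 1) ([SSym.bang], true)) := by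
  intro Q hQ
  have hstep : SysStep (([SSym.ques], false) ::ₘ replicate (m + 1) ([SSym.bang], true))
      (([], true) ::ₘ ([], false) ::ₘ replicate m ([SSym.bang], true)) :=
    ⟨[], [], true, false, _, by simp [cons_swap], rfl⟩
  have : Q = ([SSym.ques], false) ::ₘ replicate (m + 1) ([SSym.bang], true) ∨ SSuccessful Q := by
    induction hQ with
    | refl => exact .inl rfl
    | tail _ hst ih =>
      rcases ih with rfl | hs
      · exact .inr (.of_sysStep_ques_cons_bangs hst)
      · exact .inr (hs.sysStep hst)
  rcases this with rfl | hs
  · exact ⟨_, .single hstep, mem_cons_self _ _⟩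
  · exact ⟨Q, .refl, hs⟩

end SyncSimple

section Refutation

/- States have the form `W ::ₘ (replicate m A + replicate kk B)`: the translated `?0` thread `W`,
`m` untouched copies `A` of `τ(!)✓`, and `kk` copies `B` parked just before their blocking `P_i`. -/

variable {k : ℕ} {IS : Store k} {i : Fin k} {pre rest : List (LSym k)}

theorem exists_reflTransGen_park (hIS : ∀ j ≠ i, IS j = true)
    (hpre : ∀ σ ≤ IS, ∃ τ, SoloRun σ pre τ ∧ τ i = true)
    {σ : Store k} {kk : ℕ} (hσ : σ i = true → IS i = true ∨ 0 < kk) :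
    ∃ n τ, (∀ W m, ReflTransGen LockStep
        (W ::ₘ (replicate (m + n) (pre ++ (LOp.put, i) :: rest, true) +
          replicate kk ((LOp.put, i) :: rest, true)), σ)
        (W ::ₘ (replicate m (pre ++ (LOp.put, i) :: rest, true) +
          replicate (kk + n) ((LOp.put, i) :: rest, true)), τ)) ∧
      0 < kk + n ∧ τ i = true := by
  by_cases h : σ i = true → IS i = true
  · have hle : σ ≤ IS := fun j => Bool.le_iff_imp.2 fun hj =>
      if hji : j = i then hji ▸ h (hji ▸ hj) else hIS j hji
    obtain ⟨τ, hrun, hτ⟩ := hpre σ hle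
    refine ⟨1, τ, fun W m => ?_, by omega, hτ⟩
    simpa [cons_swap, add_cons] using hrun.reflTransGen_lockStep _ true
      (W ::ₘ (replicate m (pre ++ (LOp.put, i) :: rest, true) +
        replicate kk ((LOp.put, i) :: rest, true)))
  · obtain ⟨hσi, hISi⟩ := Classical.not_imp.1 h
    exact ⟨0, σ, fun W m => .refl, (hσ hσi).resolve_left hISi, hσi⟩

theorem exists_reflTransGen_not_lMayConv_of_full (hIS : ∀ j ≠ i, IS j = true)
    (hpre : ∀ σ ≤ IS, ∃ τ, SoloRun σ pre τ ∧ τ i = true) (w : List (LSym k)) :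
    ∀ (σ : Store k) (kk : ℕ), 0 < kk → σ i = true →
      ∃ m Q, ReflTransGen LockStep
        ((w, false) ::ₘ (replicate m (pre ++ (LOp.put, i) :: rest, true) +
          replicate kk ((LOp.put, i) :: rest, true)), σ) Q ∧ ¬ LMayConv Q := by
  have hstuck : ∀ w σ kk, ThreadStuck σ (w, false) → σ i = true → ¬ LMayConv
      ((w, false) ::ₘ (replicate 0 (pre ++ (LOp.put, i) :: rest, true) +
        replicate kk ((LOp.put, i) :: rest, true)), σ) := by
    intro w σ kk hw hσi
    refine not_lMayConv_of_forall_threadStuck fun x hx => ?_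
    simp only [replicate_zero, zero_add, mem_cons, mem_replicate] at hx
    rcases hx with rfl | ⟨-, rfl⟩
    exacts [hw, hσi]
  induction w with
  | nil => exact fun σ kk _ hσi => ⟨0, _, .refl, hstuck [] σ kk rfl hσi⟩
  | cons x w ih =>
    intro σ kk hkk hσi
    rcases SoloRun.threadStuck_or_exists σ x w false with hx | ⟨σ', hx⟩
    · exact ⟨0, _, .refl, hstuck _ σ kk hx hσi⟩
    obtain ⟨n, τ, hpark, hn, hτi⟩ :=
      exists_reflTransGen_park (rest := rest) hIS hpre fun _ => .inr hkk
    obtain ⟨m, Q, hQ, hQstuck⟩ := ih τ (kk + n) hn hτi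
    refine ⟨m + n, Q, ?_, hQstuck⟩
    exact (hx.reflTransGen_lockStep w false _).trans ((hpark _ m).trans hQ)

theorem exists_reflTransGen_not_lMayConv (hIS : ∀ j ≠ i, IS j = true)
    (hpre : ∀ σ ≤ IS, ∃ τ, SoloRun σ pre τ ∧ τ i = true) (w : List (LSym k)) :
    ∃ m, 0 < m ∧ ∃ Q, ReflTransGen LockStep
      ((w, false) ::ₘ replicate m (pre ++ (LOp.put, i) :: rest, true), IS) Q ∧ ¬ LMayConv Q := by
  obtain ⟨n, τ, hpark, hn, hτi⟩ :=
    exists_reflTransGen_park (rest := rest) (σ := IS) (kk := 0) hIS hpre .inl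
  obtain ⟨m, Q, hQ, hQstuck⟩ :=
    exists_reflTransGen_not_lMayConv_of_full hIS hpre w τ (0 + n) hn hτi
  refine ⟨m + n, by omega, Q, ?_, hQstuck⟩
  simpa using (hpark _ m).trans hQ

end Refutation

/-- for two locks, blocking type `(P_1P_1, P_2)` is impossible for a
correct compositional translation, for any initial store. -/
theorem no_blocking_type_PP_P2 :
    ∀ (IS : Store 2) (tb tq : List (LSym 2)),
      Correct IS tb tq →
      BlockingTypePP IS tb 0 → BlockingTypeP IS tq 1 → False := by
  intro IS tb tq hcor hPP hP
  obtain ⟨pre, rest, rfl, hpre⟩ := hPP.exists_soloRun_apply_eq_true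
  have hIS : ∀ j ≠ (0 : Fin 2), IS j = true := by
    intro j hj
    obtain rfl : j = 1 := by omega
    exact hP.apply_eq_true
  obtain ⟨m, hm, Q, hQ, hQstuck⟩ := exists_reflTransGen_not_lMayConv (rest := rest) hIS hpre tq
  obtain ⟨m, rfl⟩ := Nat.exists_eq_add_of_lt hm
  have hmust := (hcor _).2.1 (sMustConv_ques_cons_bangs m)
  exact hQstuck (hmust Q (by simpa [transProc, transSub] using hQ))
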